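/- Let d,m ∈ ℕ, T ∈ [0,∞), ξ ∈ ℝ^d, σ ∈ ℝ^{d×m}, φ ∈ C(ℝ^m,[0,∞)), V ∈ C¹(ℝ^d,[0,∞)), w ∈ C([0,T],ℝ^m), let ‖·‖ be a norm on ℝ^d, let μ: ℝ^d → ℝ^d be a locally Lipschitz continuous function, and assume for all x ∈ ℝ^d and z ∈ ℝ^m that V'(x)μ(x+σz) ≤ φ(z)V(x) and ‖x‖ ≤ V(x). Then there exists a unique y ∈ C([0,T],ℝ^d) such that for all t ∈ [0,T] it holds that y(t) = ξ + ∫₀^t μ(y(s)) ds + σw(t). -/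

import Mathlib

open MeasureTheory ProbabilityTheory Filter
open scoped ENNReal NNReal

noncomputable section

/-- `N` is a norm on the real vector space `E`. -/
def IsNorm {E : Type*} [AddCommGroup E] [Module ℝ E] (N : E → ℝ) : Prop :=
  (∀ x, N x = 0 ↔ x = 0) ∧ (∀ (a : ℝ) (x : E), N (a • x) = |a| * N x) ∧
    ∀ x y, N (x + y) ≤ N x + N y

/-!
Put `u = σ w`. A continuous `y` solves the integral equation iff `x = y - u` is an integral curve
of `f t x = μ (x + u t)` with `x 0 = ξ`. Along any such curve the Lyapunov inequality and Grönwall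
give `V (x t) ≤ V ξ * exp (C * T)` with `C = max φ ∘ w`, and the equivalence of norms on `ℝ^d`
turns `Nd ≤ V` into a fixed ball containing `x`; `f` is Lipschitz there, which gives uniqueness.
For existence, multiply `f` by a radial cutoff equal to `1` on that ball: the new field is
globally Lipschitz and bounded, so Picard–Lindelöf solves it on `[0, T]`, and as the cutoff keeps
the Lyapunov inequality, the same bound confines this solution to the ball, where it solves the
original equation.
-/

open Set Metric Bornology Function
open scoped Topology

section IsNorm

variable {E : Type*} [NormedAddCommGroup E] [NormedSpace ℝ E] {N : E → ℝ}

def IsNorm.toSeminorm (hN : IsNorm N) : Seminorm ℝ E :=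
  Seminorm.of N hN.2.2 fun a x => by rw [hN.2.1, Real.norm_eq_abs]

lemma IsNorm.nonneg (hN : IsNorm N) (x : E) : 0 ≤ N x :=
  apply_nonneg hN.toSeminorm x

lemma IsNorm.continuous [FiniteDimensional ℝ E] (hN : IsNorm N) : Continuous N :=
  hN.toSeminorm.convexOn.locallyLipschitz.continuous

lemma IsNorm.exists_pos_mul_norm_le [FiniteDimensional ℝ E] (hN : IsNorm N) :
    ∃ c > 0, ∀ x, c * ‖x‖ ≤ N x := by
  rcases subsingleton_or_nontrivial E with hE | hE
  · exact ⟨1, one_pos, fun x => by simp [Subsingleton.elim x 0, (hN.1 0).2 rfl]⟩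
  obtain ⟨z, hz, hmin⟩ := (isCompact_sphere (0 : E) 1).exists_isMinOn
    (NormedSpace.sphere_nonempty.2 zero_le_one) hN.continuous.continuousOn
  have hNz : 0 < N z := (hN.nonneg z).lt_of_ne fun h =>
    ne_zero_of_mem_sphere one_ne_zero ⟨z, hz⟩ ((hN.1 z).1 h.symm)
  refine ⟨N z, hNz, fun x => ?_⟩
  rcases eq_or_ne x 0 with rfl | hx
  · simp [(hN.1 0).2 rfl]
  have hxz : N z ≤ N (‖x‖⁻¹ • x) := hmin (by simp [norm_smul, hx])
  rwa [hN.2.1, abs_inv, abs_norm, le_inv_mul_iff₀ (norm_pos_iff.2 hx), mul_comm] at hxz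

lemma IsNorm.isBounded_setOf_le [FiniteDimensional ℝ E] (hN : IsNorm N) (M : ℝ) :
    IsBounded {x | N x ≤ M} := by
  obtain ⟨c, hc, hcN⟩ := hN.exists_pos_mul_norm_le
  refine (isBounded_closedBall (x := (0 : E)) (r := M / c)).subset fun x hx => ?_
  rw [mem_closedBall_zero_iff, le_div_iff₀' hc]
  exact (hcN x).trans hx

end IsNorm

lemma locallyLipschitz_of_forall_isBounded {X Y : Type*} [PseudoMetricSpace X]
    [PseudoMetricSpace Y] {g : X → Y} (hg : ∀ s : Set X, IsBounded s → ∃ K, LipschitzOnWith K g s) :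
    LocallyLipschitz g := fun x =>
  have ⟨K, hK⟩ := hg _ (isBounded_closedBall (x := x) (r := 1))
  ⟨K, _, closedBall_mem_nhds x one_pos, hK⟩

lemma exists_lipschitzOnWith_closedBall_comp_add {E : Type*} [SeminormedAddCommGroup E]
    {g : E → E} (hg : ∀ s : Set E, IsBounded s → ∃ K, LipschitzOnWith K g s) {u : ℝ → E}
    {s : Set ℝ} {W : ℝ} (hW : ∀ t ∈ s, ‖u t‖ ≤ W) (r : ℝ) :
    ∃ K, ∀ t ∈ s, LipschitzOnWith K (fun x => g (x + u t)) (closedBall 0 r) := by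
  obtain ⟨K, hK⟩ := hg _ (isBounded_closedBall (x := 0) (r := r + W))
  refine ⟨K, fun t ht x hx y hy => ?_⟩
  have hmem : ∀ x ∈ closedBall (0 : E) r, x + u t ∈ closedBall 0 (r + W) :=
    fun x hx => mem_closedBall_zero_iff.2 ((norm_add_le _ _).trans
      (add_le_add (mem_closedBall_zero_iff.1 hx) (hW t ht)))
  simpa [edist_add_right] using hK (hmem x hx) (hmem y hy)

section RadialCutoff

variable {E F : Type*} [NormedAddCommGroup E] [NormedAddCommGroup F] [NormedSpace ℝ F]
  {R : ℝ} {x : E}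

def radialCutoff (R : ℝ) (x : E) : ℝ := max 0 (min 1 (R + 1 - ‖x‖))

lemma radialCutoff_nonneg : 0 ≤ radialCutoff R x := le_max_left _ _

lemma radialCutoff_le_one : radialCutoff R x ≤ 1 :=
  max_le zero_le_one (min_le_left _ _)

lemma radialCutoff_of_norm_le (hx : ‖x‖ ≤ R) : radialCutoff R x = 1 := by
  rw [radialCutoff, min_eq_left (by linarith), max_eq_right zero_le_one]

lemma radialCutoff_of_not_mem_closedBall (hx : x ∉ closedBall 0 (R + 1)) :
    radialCutoff R x = 0 := by
  rw [mem_closedBall_zero_iff, not_le] at hx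
  rw [radialCutoff, min_eq_right (by linarith), max_eq_left (by linarith)]

lemma lipschitzWith_radialCutoff (R : ℝ) : LipschitzWith 1 (radialCutoff (E := E) R) :=
  (((LipschitzWith.const (R + 1)).sub lipschitzWith_one_norm).const_min 1).const_max 0 |>.weaken
    (by simp)

variable {f : E → F} {K B : ℝ≥0}

lemma norm_radialCutoff_smul_le (hB : ∀ x ∈ closedBall 0 (R + 1), ‖f x‖ ≤ B) (x : E) :
    ‖radialCutoff R x • f x‖ ≤ B := by
  by_cases hx : x ∈ closedBall 0 (R + 1)
  · rw [norm_smul, Real.norm_of_nonneg radialCutoff_nonneg]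
    exact (mul_le_of_le_one_left (norm_nonneg _) radialCutoff_le_one).trans (hB x hx)
  · simp [radialCutoff_of_not_mem_closedBall hx]

/-- Writing `χ` for the cutoff, `χ x • f x - χ y • f y = (χ x - χ y) • f x + χ y • (f x - f y)`,
and the second term vanishes unless `y` lies in the ball where `f` is Lipschitz. -/
lemma lipschitzWith_radialCutoff_smul (hf : LipschitzOnWith K f (closedBall 0 (R + 1)))
    (hB : ∀ x ∈ closedBall 0 (R + 1), ‖f x‖ ≤ B) :
    LipschitzWith (B + K) fun x => radialCutoff R x • f x := by
  set χ := radialCutoff (E := E) R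
  have key : ∀ x y, x ∈ closedBall (0 : E) (R + 1) →
      dist (χ x • f x) (χ y • f y) ≤ (B + K) * dist x y := by
    intro x y hx
    have h₁ : ‖(χ x - χ y) • f x‖ ≤ B * dist x y := by
      rw [norm_smul, mul_comm]
      have hχ : |χ x - χ y| ≤ dist x y := by
        simpa [Real.dist_eq] using (lipschitzWith_radialCutoff R).dist_le_mul x y
      exact mul_le_mul (hB x hx) hχ (norm_nonneg _) B.2
    have h₂ : ‖χ y • (f x - f y)‖ ≤ K * dist x y := by
      by_cases hy : y ∈ closedBall (0 : E) (R + 1)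
      · rw [norm_smul, Real.norm_of_nonneg radialCutoff_nonneg, ← dist_eq_norm]
        exact (mul_le_of_le_one_left dist_nonneg radialCutoff_le_one).trans
          (hf.dist_le_mul x hx y hy)
      · simp [χ, radialCutoff_of_not_mem_closedBall hy]; positivity
    calc dist (χ x • f x) (χ y • f y) = ‖(χ x - χ y) • f x + χ y • (f x - f y)‖ := by
          rw [dist_eq_norm, sub_smul, smul_sub]; abel_nf
      _ ≤ B * dist x y + K * dist x y := norm_add_le_of_le h₁ h₂
      _ = (B + K) * dist x y := by ring
  refine LipschitzWith.of_dist_le_mul fun x y => ?_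
  push_cast
  by_cases hx : x ∈ closedBall (0 : E) (R + 1)
  · exact key x y hx
  by_cases hy : y ∈ closedBall (0 : E) (R + 1)
  · rw [dist_comm, dist_comm x]; exact key y x hy
  · simp [χ, radialCutoff_of_not_mem_closedBall hx, radialCutoff_of_not_mem_closedBall hy]
    positivity

end RadialCutoff

section IntegralCurve

variable {E : Type*} [NormedAddCommGroup E] [NormedSpace ℝ E] {f : ℝ → E → E} {α : ℝ → E}
  {a b : ℝ}

lemma IsIntegralCurveOn.hasDerivWithinAt_Ici (hα : IsIntegralCurveOn α f (Icc a b)) :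
    ∀ t ∈ Ico a b, HasDerivWithinAt α (f t (α t)) (Ici t) t := fun t ht =>
  (hα t (Ico_subset_Icc_self ht)).mono_of_mem_nhdsWithin (Icc_mem_nhdsGE_of_mem ht)

lemma IsIntegralCurveOn.apply_le_mul_exp {V : E → ℝ} {C : ℝ}
    (hα : IsIntegralCurveOn α f (Icc a b)) (hV : Differentiable ℝ V)
    (hLyap : ∀ t ∈ Ico a b, fderiv ℝ V (α t) (f t (α t)) ≤ C * V (α t)) :
    ∀ t ∈ Icc a b, V (α t) ≤ V (α a) * Real.exp (C * (t - a)) := by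
  intro t ht
  have hslope : ∀ s ∈ Ico a b, ∀ r, fderiv ℝ V (α s) (f s (α s)) < r →
      ∃ᶠ z in 𝓝[>] s, (z - s)⁻¹ * (V (α z) - V (α s)) < r := by
    intro s hs r hr
    have hd : HasDerivWithinAt (V ∘ α) (fderiv ℝ V (α s) (f s (α s))) (Ici s) s :=
      (hV (α s)).hasFDerivAt.comp_hasDerivWithinAt s (hα.hasDerivWithinAt_Ici s hs)
    exact (hd.liminf_right_slope_le hr).mono fun z hz => by
      rwa [slope_def_field, div_eq_inv_mul] at hz
  simpa [gronwallBound_ε0] using le_gronwallBound_of_liminf_deriv_right_le (ε := 0)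
    (hV.continuous.comp_continuousOn hα.continuousOn) hslope le_rfl
    (fun s hs => (hLyap s hs).trans_eq (add_zero _).symm) t ht

variable [CompleteSpace E]

lemma exists_isIntegralCurveOn_Icc_of_lipschitzWith {K B : ℝ≥0} (hab : a ≤ b)
    (hlip : ∀ t ∈ Icc a b, LipschitzWith K (f t))
    (hcont : ∀ x, ContinuousOn (f · x) (Icc a b)) (hB : ∀ t ∈ Icc a b, ∀ x, ‖f t x‖ ≤ B)
    (ξ : E) : ∃ α : ℝ → E, α a = ξ ∧ IsIntegralCurveOn α f (Icc a b) := by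
  have hpl : IsPicardLindelof f (tmin := a) (tmax := b) ⟨a, left_mem_Icc.2 hab⟩ ξ
      (B * ⟨b - a, sub_nonneg.2 hab⟩) 0 B K :=
    { lipschitzOnWith := fun t ht => (hlip t ht).lipschitzOnWith
      continuousOn := fun x _ => hcont x
      norm_le := fun t ht x _ => hB t ht x
      mul_max_le := by simp [hab]; rfl }
  exact hpl.exists_eq_forall_mem_Icc_hasDerivWithinAt₀

end IntegralCurve

section IntegralEquation

variable {E : Type*} [NormedAddCommGroup E] [NormedSpace ℝ E] [CompleteSpace E]
  {f : ℝ → E → E} {α : ℝ → E} {a b : ℝ}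

lemma IsIntegralCurveOn.eq_integral (hf : ContinuousOn (uncurry f) (Icc a b ×ˢ univ))
    (hα : IsIntegralCurveOn α f (Icc a b)) :
    ∀ t ∈ Icc a b, α t = α a + ∫ s in a..t, f s (α s) := fun t ht => by
  have hsub : uIcc a t ⊆ Icc a b := uIcc_subset_Icc (left_mem_Icc.2 (ht.1.trans ht.2)) ht
  exact (ODE.picard_eq_of_hasDerivAt (hf.mono (prod_mono hsub subset_rfl))
    (fun s hs => (hα s (hsub hs)).mono hsub) (mapsTo_univ _ _)).symm

lemma isIntegralCurveOn_of_eq_integral {ξ : E} (hab : a ≤ b)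
    (hf : ContinuousOn (uncurry f) (Icc a b ×ˢ univ)) (hα : ContinuousOn α (Icc a b))
    (heq : ∀ t ∈ Icc a b, α t = ξ + ∫ s in a..t, f s (α s)) :
    α a = ξ ∧ IsIntegralCurveOn α f (Icc a b) :=
  ⟨by simpa using heq a (left_mem_Icc.2 hab), fun t ht =>
    (ODE.hasDerivWithinAt_picard_Icc (left_mem_Icc.2 hab) hf hα (fun _ _ => trivial) ξ
      ht).congr_of_mem heq ht⟩

end IntegralEquation

section Lyapunov

variable {E : Type*} [NormedAddCommGroup E] {f : ℝ → E → E}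

lemma exists_norm_le_of_lipschitzOnWith_closedBall {s : Set ℝ} {K : ℝ≥0} {r : ℝ}
    (hs : IsCompact s) (hr : 0 ≤ r) (hlip : ∀ t ∈ s, LipschitzOnWith K (f t) (closedBall 0 r))
    (hcont : ContinuousOn (f · 0) s) :
    ∃ B : ℝ≥0, ∀ t ∈ s, ∀ x ∈ closedBall 0 r, ‖f t x‖ ≤ B := by
  obtain ⟨B₀, hB₀⟩ := hs.exists_bound_of_continuousOn hcont
  refine ⟨(B₀ + K * r).toNNReal, fun t ht x hx => ?_⟩
  have hx0 : ‖f t x - f t 0‖ ≤ K * r := by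
    calc ‖f t x - f t 0‖ = dist (f t x) (f t 0) := (dist_eq_norm _ _).symm
      _ ≤ K * dist x 0 :=
          (hlip t ht).dist_le_mul x hx 0 (mem_closedBall_self hr)
      _ ≤ K * r := by gcongr; exact hx
  calc ‖f t x‖ ≤ ‖f t 0‖ + ‖f t x - f t 0‖ := norm_le_norm_add_norm_sub' _ _
    _ ≤ B₀ + K * r := add_le_add (hB₀ t ht) hx0
    _ ≤ (B₀ + K * r).toNNReal := Real.le_coe_toNNReal _

theorem exists_isIntegralCurveOn_Icc_forall_eqOn_of_lyapunov [NormedSpace ℝ E] [CompleteSpace E]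
    {V : E → ℝ} {T C : ℝ} (ξ : E) (hT : 0 ≤ T) (hC : 0 ≤ C)
    (hlip : ∀ r, ∃ K, ∀ t ∈ Icc 0 T, LipschitzOnWith K (f t) (closedBall 0 r))
    (hcont : ∀ x, ContinuousOn (f · x) (Icc 0 T))
    (hV : Differentiable ℝ V) (hV0 : ∀ x, 0 ≤ V x) (hVbdd : ∀ M, IsBounded {x | V x ≤ M})
    (hLyap : ∀ t ∈ Icc 0 T, ∀ x, fderiv ℝ V x (f t x) ≤ C * V x) :
    ∃ α : ℝ → E, (α 0 = ξ ∧ IsIntegralCurveOn α f (Icc 0 T)) ∧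
      ∀ β : ℝ → E, β 0 = ξ → IsIntegralCurveOn β f (Icc 0 T) → EqOn β α (Icc 0 T) := by
  obtain ⟨R, hR0, hR⟩ := (hVbdd (V ξ * Real.exp (C * T))).subset_closedBall_lt 0 0
  have apriori : ∀ g : ℝ → E → E, (∀ t ∈ Icc 0 T, ∀ x, fderiv ℝ V x (g t x) ≤ C * V x) →
      ∀ β : ℝ → E, β 0 = ξ → IsIntegralCurveOn β g (Icc 0 T) →
      ∀ t ∈ Icc 0 T, β t ∈ closedBall 0 R := by
    intro g hg β hβ0 hβ t ht
    have hVβ := hβ.apply_le_mul_exp hV (fun s hs => hg s (Ico_subset_Icc_self hs) _) t ht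
    rw [hβ0, sub_zero] at hVβ
    exact hR (hVβ.trans (by gcongr; exacts [hV0 ξ, ht.2]))
  obtain ⟨K, hK⟩ := hlip (R + 1)
  obtain ⟨B, hB⟩ := exists_norm_le_of_lipschitzOnWith_closedBall isCompact_Icc (by linarith) hK
    (hcont 0)
  -- Cutting `f` off outside `closedBall 0 (R + 1)` keeps the Lyapunov inequality, since `C V ≥ 0`.
  set g : ℝ → E → E := fun t x => radialCutoff R x • f t x
  have hgLyap : ∀ t ∈ Icc 0 T, ∀ x, fderiv ℝ V x (g t x) ≤ C * V x := fun t ht x => by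
    simp only [g, map_smul, smul_eq_mul]
    calc radialCutoff R x * fderiv ℝ V x (f t x) ≤ radialCutoff R x * (C * V x) :=
          mul_le_mul_of_nonneg_left (hLyap t ht x) radialCutoff_nonneg
      _ ≤ C * V x := mul_le_of_le_one_left (mul_nonneg hC (hV0 x)) radialCutoff_le_one
  obtain ⟨α, hα0, hαg⟩ := exists_isIntegralCurveOn_Icc_of_lipschitzWith hT
    (fun t ht => lipschitzWith_radialCutoff_smul (hK t ht) (hB t ht))
    (fun x => continuousOn_const.smul (hcont x))
    (fun t ht => norm_radialCutoff_smul_le (hB t ht)) ξ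
  have hαR := apriori g hgLyap α hα0 hαg
  have hα : IsIntegralCurveOn α f (Icc 0 T) := fun t ht => by
    have hgf : g t (α t) = f t (α t) := by
      simp only [g, radialCutoff_of_norm_le (mem_closedBall_zero_iff.1 (hαR t ht)), one_smul]
    exact hgf ▸ hαg t ht
  refine ⟨α, ⟨hα0, hα⟩, fun β hβ0 hβ => ?_⟩
  have hβR := apriori f hLyap β hβ0 hβ
  exact ODE_solution_unique_of_mem_Icc_right
    (fun t ht => (hK t (Ico_subset_Icc_self ht)).mono (closedBall_subset_closedBall (by linarith)))
    hβ.continuousOn hβ.hasDerivWithinAt_Ici (fun t ht => hβR t (Ico_subset_Icc_self ht))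
    hα.continuousOn hα.hasDerivWithinAt_Ici (fun t ht => hαR t (Ico_subset_Icc_self ht))
    (hβ0.trans hα0.symm)

end Lyapunov

theorem perturbed_ode_existence_uniqueness_general
    (d m : ℕ) (T : ℝ) (hT : 0 ≤ T)
    (ξ : Fin d → ℝ)
    (σ : Matrix (Fin d) (Fin m) ℝ)
    (φ : (Fin m → ℝ) → ℝ) (hφc : Continuous φ) (hφ0 : ∀ z, 0 ≤ φ z)
    (V : (Fin d → ℝ) → ℝ) (hV : ContDiff ℝ 1 V) (hV0 : ∀ x, 0 ≤ V x)
    (w : ℝ → (Fin m → ℝ)) (hwc : ContinuousOn w (Set.Icc (0 : ℝ) T))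
    (Nd : (Fin d → ℝ) → ℝ) (hNd : IsNorm Nd)
    (μ : (Fin d → ℝ) → (Fin d → ℝ))
    (hμ : ∀ s : Set (Fin d → ℝ), Bornology.IsBounded s →
      ∃ L : ℝ≥0, LipschitzOnWith L μ s)
    (hLyap : ∀ (x : Fin d → ℝ) (z : Fin m → ℝ),
      fderiv ℝ V x (μ (x + σ.mulVec z)) ≤ φ z * V x)
    (hNV : ∀ x, Nd x ≤ V x) :
    ∃ y : ℝ → (Fin d → ℝ),
      (ContinuousOn y (Set.Icc (0 : ℝ) T) ∧
        ∀ t ∈ Set.Icc (0 : ℝ) T,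
          y t = ξ + (∫ s in (0 : ℝ)..t, μ (y s)) + σ.mulVec (w t)) ∧
      ∀ z : ℝ → (Fin d → ℝ),
        (ContinuousOn z (Set.Icc (0 : ℝ) T) ∧
          ∀ t ∈ Set.Icc (0 : ℝ) T,
            z t = ξ + (∫ s in (0 : ℝ)..t, μ (z s)) + σ.mulVec (w t)) →
        Set.EqOn z y (Set.Icc (0 : ℝ) T) := by
  set u : ℝ → Fin d → ℝ := fun t => σ.mulVec (w t)
  set f : ℝ → (Fin d → ℝ) → Fin d → ℝ := fun t x => μ (x + u t)
  have hu : ContinuousOn u (Icc 0 T) :=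
    (Matrix.mulVecLin σ).continuous_of_finiteDimensional.comp_continuousOn hwc
  obtain ⟨W, hW⟩ := isCompact_Icc.exists_bound_of_continuousOn hu
  obtain ⟨t₀, -, hφmax⟩ := isCompact_Icc.exists_isMaxOn (nonempty_Icc.2 hT)
    (hφc.comp_continuousOn hwc)
  have hf : ContinuousOn (uncurry f) (Icc 0 T ×ˢ univ) :=
    (locallyLipschitz_of_forall_isBounded hμ).continuous.comp_continuousOn
      (continuousOn_snd.add (hu.comp continuousOn_fst fun _ h => h.1))
  obtain ⟨x, ⟨hx0, hx⟩, hxuniq⟩ := exists_isIntegralCurveOn_Icc_forall_eqOn_of_lyapunov ξ hT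
    (hφ0 (w t₀)) (exists_lipschitzOnWith_closedBall_comp_add hμ hW)
    (fun x => hf.comp (continuousOn_id.prodMk continuousOn_const) fun _ h => ⟨h, trivial⟩)
    (hV.differentiable one_ne_zero) hV0
    (fun M => (hNd.isBounded_setOf_le M).subset fun y hy => (hNV y).trans hy)
    (fun t ht x => (hLyap x (w t)).trans (mul_le_mul_of_nonneg_right (hφmax ht) (hV0 x)))
  refine ⟨x + u, ⟨hx.continuousOn.add hu, fun t ht => ?_⟩, fun z ⟨hzc, hz⟩ t ht => ?_⟩
  · simp [f, u, hx0, hx.eq_integral hf t ht]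
  · obtain ⟨hz0, hzu⟩ := isIntegralCurveOn_of_eq_integral (ξ := ξ) hT hf (hzc.sub hu)
      fun s hs => by simp [f, u, hz s hs]
    simpa using congrArg (· + u t) (hxuniq (z - u) hz0 hzu ht)

/-- **Lemma (existence and uniqueness of solutions of perturbed ODEs under a
Lyapunov-type condition).** -/
theorem perturbed_ode_existence_uniqueness
    (d m : ℕ) (hd : 0 < d) (hm : 0 < m) (T : ℝ) (hT : 0 ≤ T)
    (ξ : Fin d → ℝ)
    (σ : Matrix (Fin d) (Fin m) ℝ)
    (φ : (Fin m → ℝ) → ℝ) (hφc : Continuous φ) (hφ0 : ∀ z, 0 ≤ φ z)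
    (V : (Fin d → ℝ) → ℝ) (hV : ContDiff ℝ 1 V) (hV0 : ∀ x, 0 ≤ V x)
    (w : ℝ → (Fin m → ℝ)) (hwc : ContinuousOn w (Set.Icc (0 : ℝ) T))
    (Nd : (Fin d → ℝ) → ℝ) (hNd : IsNorm Nd)
    (μ : (Fin d → ℝ) → (Fin d → ℝ))
    (hμ : ∀ s : Set (Fin d → ℝ), Bornology.IsBounded s →
      ∃ L : ℝ≥0, LipschitzOnWith L μ s)
    (hLyap : ∀ (x : Fin d → ℝ) (z : Fin m → ℝ),
      fderiv ℝ V x (μ (x + σ.mulVec z)) ≤ φ z * V x)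
    (hNV : ∀ x, Nd x ≤ V x) :
    ∃ y : ℝ → (Fin d → ℝ),
      (ContinuousOn y (Set.Icc (0 : ℝ) T) ∧
        ∀ t ∈ Set.Icc (0 : ℝ) T,
          y t = ξ + (∫ s in (0 : ℝ)..t, μ (y s)) + σ.mulVec (w t)) ∧
      ∀ z : ℝ → (Fin d → ℝ),
        (ContinuousOn z (Set.Icc (0 : ℝ) T) ∧
          ∀ t ∈ Set.Icc (0 : ℝ) T,
            z t = ξ + (∫ s in (0 : ℝ)..t, μ (z s)) + σ.mulVec (w t)) →
        Set.EqOn z y (Set.Icc (0 : ℝ) T) :=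
  perturbed_ode_existence_uniqueness_general d m T hT ξ σ φ hφc hφ0 V hV hV0 w hwc Nd hNd μ hμ hLyap
    hNV
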